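/- Let f : ℝ^{d×N} → [-∞,+∞] be coercive, i.e. f(ξ) → +∞ as |ξ| → +∞. Then for every λ ∈ ℝ, the closure of L_λ(f^{lc}) is contained in co(L_λ(f^{ls})); in particular, L_λ(f^{lc}) ⊆ co( ⋂_{ε>0} closure(L_{λ+ε}(f)) ). -/

import Mathlib

open Filter Topology

variable {X : Type*}

/-- A function into the extended reals is level convex if along segments its value
is at most the maximum of the values at the endpoints. -/
def LevelConvex [AddCommGroup X] [Module ℝ X] (F : X → EReal) : Prop :=
  ∀ x y : X, ∀ t : ℝ, 0 < t → t < 1 →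
    F (t • x + (1 - t) • y) ≤ max (F x) (F y)

/-- The lower semicontinuous envelope `Γ_τ(F)`: the pointwise supremum of all
lower semicontinuous functions below `F`. -/
noncomputable def lscEnv [TopologicalSpace X] (F : X → EReal) : X → EReal :=
  fun x => ⨆ G : {G : X → EReal // LowerSemicontinuous G ∧ G ≤ F}, (G : X → EReal) x

/-- The level convex envelope `F^{lc}`: the pointwise supremum of all level convex
functions below `F`. -/
noncomputable def lcEnv [AddCommGroup X] [Module ℝ X] (F : X → EReal) : X → EReal :=
  fun x => ⨆ G : {G : X → EReal // LevelConvex G ∧ G ≤ F}, (G : X → EReal) x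

/-- The lower semicontinuous level convex envelope `F^{lslc}`: the pointwise supremum
of all functions below `F` which are both lower semicontinuous and level convex. -/
noncomputable def lslcEnv [TopologicalSpace X] [AddCommGroup X] [Module ℝ X]
    (F : X → EReal) : X → EReal :=
  fun x => ⨆ G : {G : X → EReal // LowerSemicontinuous G ∧ LevelConvex G ∧ G ≤ F},
    (G : X → EReal) x

/-!
Write `K ε = closure {f ≤ λ + ε}`. Then `{f^{ls} ≤ λ} = ⋂_{ε>0} K ε`, and coercivity makes every
`K ε` compact. The function equal to `⊥` on `co {f ≤ λ + ε}` and to `λ + ε` elsewhere is a level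
convex minorant of `f`, so `{f^{lc} ≤ λ} ⊆ co (K ε)` for every `ε > 0`. Since the `K ε` decrease
as `ε ↓ 0`, a separation argument and Cantor's intersection theorem give
`⋂_ε co (K ε) ⊆ co (⋂_ε K ε)`. Finally, by Carathéodory, the convex hull of the compact set
`⋂_ε K ε` is compact, hence closed, and so it also contains `closure {f^{lc} ≤ λ}`.
-/

open Set

section ConvexHull

variable {E : Type*} [AddCommGroup E] [Module ℝ E] [TopologicalSpace E]
  [IsTopologicalAddGroup E] [ContinuousSMul ℝ E]

/-- By Carathéodory, the convex hull is the union over `k ≤ dim E + 1` of the images of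
`stdSimplex ℝ (Fin k) × s^k` under `(w, z) ↦ ∑ i, w i • z i`. -/
theorem isCompact_convexHull [FiniteDimensional ℝ E] {s : Set E} (hs : IsCompact s) :
    IsCompact (convexHull ℝ s) := by
  let comb (k : ℕ) : (Fin k → ℝ) × (Fin k → E) → E := fun p => ∑ i, p.1 i • p.2 i
  have hhull : convexHull ℝ s = ⋃ k : Fin (Module.finrank ℝ E + 2),
      comb k '' (stdSimplex ℝ (Fin k) ×ˢ univ.pi fun _ => s) := by
    refine Subset.antisymm (fun x hx => ?_) (iUnion_subset fun k => ?_)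
    · obtain ⟨ι, _, z, w, hzs, hind, hw0, hw1, rfl⟩ := eq_pos_convex_span_of_mem_convexHull hx
      have hcard : Fintype.card ι < Module.finrank ℝ E + 2 :=
        Nat.lt_succ_of_le <| hind.card_le_finrank_succ.trans <|
          Nat.succ_le_succ (Submodule.finrank_le _)
      let e := Fintype.equivFin ι
      refine mem_iUnion.2 ⟨⟨_, hcard⟩, (w ∘ e.symm, z ∘ e.symm), ⟨⟨fun i => (hw0 _).le, ?_⟩,
        fun i _ => hzs (mem_range_self _)⟩, ?_⟩
      · simpa only [Function.comp_apply, e.symm.sum_comp] using hw1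
      · exact e.symm.sum_comp fun i => w i • z i
    · rintro _ ⟨⟨w, z⟩, ⟨hw, hz⟩, rfl⟩
      exact (convex_convexHull ℝ s).sum_mem (fun i _ => hw.1 i) hw.2
        fun i _ => subset_convexHull ℝ s (hz i (mem_univ i))
  rw [hhull]
  refine isCompact_iUnion fun k => ((isCompact_stdSimplex ℝ (Fin k)).prod
    (isCompact_univ_pi fun _ => hs)).image ?_
  exact continuous_finsetSum _ fun i _ =>
    ((continuous_apply i).comp continuous_fst).smul ((continuous_apply i).comp continuous_snd)

/-- Separate `x` from `convexHull (⋂ i, K i)` by a closed half-space `H ∋ x`. Each `K i` meets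
`H`, since otherwise its convex hull would miss `x`; by Cantor's intersection theorem so does
`⋂ i, K i`, a contradiction. -/
theorem iInter_convexHull_subset_convexHull_iInter [FiniteDimensional ℝ E] [T2Space E]
    [LocallyConvexSpace ℝ E] {ι : Type*} [Nonempty ι] {K : ι → Set E}
    (hdir : Directed (· ⊇ ·) K) (hK : ∀ i, IsCompact (K i)) :
    ⋂ i, convexHull ℝ (K i) ⊆ convexHull ℝ (⋂ i, K i) := by
  intro x hx
  by_contra hxK
  obtain ⟨i₀⟩ := ‹Nonempty ι›
  have hcompact : IsCompact (⋂ i, K i) :=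
    (hK i₀).of_isClosed_subset (isClosed_iInter fun i => (hK i).isClosed) (iInter_subset _ i₀)
  obtain ⟨ℓ, u, hℓ, hux⟩ := geometric_hahn_banach_closed_point (convex_convexHull ℝ _)
    (isCompact_convexHull hcompact).isClosed hxK
  set H : Set E := {y | u ≤ ℓ y}
  have hH : IsClosed H := isClosed_le continuous_const ℓ.continuous
  have hmeet : ∀ i, (K i ∩ H).Nonempty := by
    intro i
    by_contra hempty
    have hsub : K i ⊆ {y | ℓ y < u} := fun y hy =>
      show ℓ y < u from lt_of_not_ge fun h => hempty ⟨y, hy, h⟩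
    have := convexHull_min hsub (convex_halfSpace_lt ℓ.isLinear u) (mem_iInter.1 hx i)
    exact (lt_asymm this hux).elim
  obtain ⟨y, hy⟩ := IsCompact.nonempty_iInter_of_directed_nonempty_isCompact_isClosed
    (fun i => K i ∩ H) (hdir.mono_comp (· ⊇ ·) (g := (· ∩ H)) fun _ _ h =>
      inter_subset_inter_left H h) hmeet
    (fun i => (hK i).inter_right hH) (fun i => (hK i).isClosed.inter hH)
  have hyK : y ∈ ⋂ i, K i := mem_iInter.2 fun i => (mem_iInter.1 hy i).1
  exact (hℓ y (subset_convexHull ℝ _ hyK)).not_ge (mem_iInter.1 hy i₀).2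

end ConvexHull

section Envelopes

open scoped Classical

lemma le_lscEnv [TopologicalSpace X] {F G : X → EReal} (hG : LowerSemicontinuous G)
    (hGF : G ≤ F) : G ≤ lscEnv F := fun x =>
  le_iSup (fun H : {H : X → EReal // LowerSemicontinuous H ∧ H ≤ F} => (H : X → EReal) x)
    ⟨G, hG, hGF⟩

lemma lscEnv_le [TopologicalSpace X] (F : X → EReal) : lscEnv F ≤ F := fun _ =>
  iSup_le fun H => H.2.2 _

lemma lowerSemicontinuous_lscEnv [TopologicalSpace X] (F : X → EReal) :
    LowerSemicontinuous (lscEnv F) :=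
  lowerSemicontinuous_iSup fun H : {H : X → EReal // LowerSemicontinuous H ∧ H ≤ F} => H.2.1

lemma le_lcEnv [AddCommGroup X] [Module ℝ X] {F G : X → EReal} (hG : LevelConvex G)
    (hGF : G ≤ F) : G ≤ lcEnv F := fun x =>
  le_iSup (fun H : {H : X → EReal // LevelConvex H ∧ H ≤ F} => (H : X → EReal) x)
    ⟨G, hG, hGF⟩

lemma ite_mem_bot_le {A : Set X} {c : EReal} {F : X → EReal} (h : ∀ x ∉ A, c ≤ F x) :
    (fun x => if x ∈ A then ⊥ else c) ≤ F := by
  intro x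
  by_cases hx : x ∈ A
  · simp [hx]
  · simpa [hx] using h x hx

lemma lowerSemicontinuous_ite_mem_bot [TopologicalSpace X] {A : Set X} (hA : IsClosed A)
    (c : EReal) : LowerSemicontinuous (fun x => if x ∈ A then ⊥ else c) := by
  intro x y hy
  by_cases hx : x ∈ A
  · simp [hx] at hy
  · simp only [hx, if_false] at hy
    filter_upwards [hA.isOpen_compl.mem_nhds hx] with z hz
    simpa [show z ∉ A from hz] using hy

lemma levelConvex_ite_mem_bot [AddCommGroup X] [Module ℝ X] {A : Set X} (hA : Convex ℝ A)
    (c : EReal) : LevelConvex (fun x => if x ∈ A then ⊥ else c) := by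
  intro x y t ht ht1
  by_cases hxy : x ∈ A ∧ y ∈ A
  · simp [hA hxy.1 hxy.2 ht.le (sub_nonneg.2 ht1.le) (add_sub_cancel t 1)]
  · have hle : (if t • x + (1 - t) • y ∈ A then ⊥ else c) ≤ c := by split <;> simp
    rcases not_and_or.1 hxy with h | h
    · exact hle.trans (le_max_of_le_left (by simp [h]))
    · exact hle.trans (le_max_of_le_right (by simp [h]))

/-- The function equal to `⊥` on `closure {F ≤ b}` and to `b` elsewhere is a lower
semicontinuous minorant of `F`. -/
lemma sublevel_lscEnv_subset_closure_sublevel [TopologicalSpace X] (F : X → EReal)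
    {a b : EReal} (hab : a < b) : {x | lscEnv F x ≤ a} ⊆ closure {x | F x ≤ b} := by
  intro x hx
  by_contra hxA
  have hbelow := ite_mem_bot_le (F := F) fun y (hy : y ∉ closure {x | F x ≤ b}) =>
    (lt_of_not_ge fun h => hy (subset_closure h)).le
  have := le_lscEnv (lowerSemicontinuous_ite_mem_bot isClosed_closure b) hbelow x
  simp only [hxA, if_false] at this
  exact hab.not_ge (this.trans hx)

lemma sublevel_lcEnv_subset_convexHull_sublevel [AddCommGroup X] [Module ℝ X]
    (F : X → EReal) {a b : EReal} (hab : a < b) :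
    {x | lcEnv F x ≤ a} ⊆ convexHull ℝ {x | F x ≤ b} := by
  intro x hx
  by_contra hxA
  have hbelow := ite_mem_bot_le (F := F) fun y (hy : y ∉ convexHull ℝ {x | F x ≤ b}) =>
    (lt_of_not_ge fun h => hy (subset_convexHull ℝ _ h)).le
  have := le_lcEnv (levelConvex_ite_mem_bot (convex_convexHull ℝ _) b) hbelow x
  simp only [hxA, if_false] at this
  exact hab.not_ge (this.trans hx)

lemma sublevel_lscEnv_eq_iInter_closure_sublevel [TopologicalSpace X] (F : X → EReal)
    (lam : ℝ) : {x | lscEnv F x ≤ lam} =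
      ⋂ ε : ℝ, ⋂ (_ : 0 < ε), closure {x | F x ≤ ((lam + ε : ℝ) : EReal)} := by
  refine Subset.antisymm (fun x hx => mem_iInter₂.2 fun ε hε =>
    sublevel_lscEnv_subset_closure_sublevel F (EReal.coe_lt_coe_iff.2 (by linarith)) hx) ?_
  intro x hx
  refine EReal.le_of_forall_lt_iff_le.1 fun z hz => ?_
  have hε : 0 < z - lam := sub_pos.2 (EReal.coe_lt_coe_iff.1 hz)
  have hx' : x ∈ closure {y | F y ≤ ((lam + (z - lam) : ℝ) : EReal)} := mem_iInter₂.1 hx _ hε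
  rw [add_sub_cancel] at hx'
  exact closure_minimal (fun y (hy : F y ≤ z) => (lscEnv_le F y).trans hy)
    ((lowerSemicontinuous_lscEnv F).isClosed_preimage z) hx'

end Envelopes

lemma isCompact_closure_sublevel_of_coercive {E : Type*} [SeminormedAddCommGroup E]
    [ProperSpace E] {f : E → EReal} (hcoer : ∀ M : ℝ, ∃ R : ℝ, ∀ ξ, R ≤ ‖ξ‖ → (M : EReal) ≤ f ξ)
    (b : ℝ) : IsCompact (closure {ξ | f ξ ≤ b}) := by
  obtain ⟨R, hR⟩ := hcoer (b + 1)
  refine Bornology.IsBounded.isCompact_closure <| (Metric.isBounded_closedBall (x := 0)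
    (r := R)).subset fun ξ (hξ : f ξ ≤ b) => mem_closedBall_zero_iff.2 <| le_of_not_ge fun h => ?_
  have := (hR ξ h).trans hξ
  norm_cast at this
  linarith

/-- if `f` is coercive then `closure(L_λ(f^{lc})) ⊆ co(L_λ(f^{ls}))`, and in
particular `L_λ(f^{lc}) ⊆ co(⋂_{ε>0} closure(L_{λ+ε}(f)))`. -/
theorem stmt7 (d N : ℕ) (f : EuclideanSpace ℝ (Fin d × Fin N) → EReal)
    (hcoer : ∀ M : ℝ, ∃ R : ℝ, ∀ ξ, R ≤ ‖ξ‖ → (M : EReal) ≤ f ξ) (lam : ℝ) :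
    closure {ξ | lcEnv f ξ ≤ (lam : EReal)} ⊆
        convexHull ℝ {ξ | lscEnv f ξ ≤ (lam : EReal)} ∧
      {ξ | lcEnv f ξ ≤ (lam : EReal)} ⊆
        convexHull ℝ (⋂ ε : ℝ, ⋂ (_ : 0 < ε),
          closure {ξ | f ξ ≤ ((lam + ε : ℝ) : EReal)}) := by
  let K : Ioi (0 : ℝ) → Set (EuclideanSpace ℝ (Fin d × Fin N)) :=
    fun ε => closure {ξ | f ξ ≤ ((lam + ε : ℝ) : EReal)}
  have hK : ∀ ε, IsCompact (K ε) := fun ε => isCompact_closure_sublevel_of_coercive hcoer _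
  have hdir : Directed (· ⊇ ·) K := Monotone.directed_ge fun ε δ hεδ =>
    closure_mono fun ξ hξ => hξ.trans (EReal.coe_le_coe_iff.2 ((add_le_add_iff_left lam).2 hεδ))
  have hiInter : ⋂ ε : ℝ, ⋂ (_ : 0 < ε), closure {ξ | f ξ ≤ ((lam + ε : ℝ) : EReal)} =
      ⋂ ε, K ε := (biInter_eq_iInter (Ioi 0) _).trans rfl
  have hL : {ξ | lcEnv f ξ ≤ (lam : EReal)} ⊆ convexHull ℝ (⋂ ε, K ε) :=
    (subset_iInter fun ε => (sublevel_lcEnv_subset_convexHull_sublevel f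
      (EReal.coe_lt_coe_iff.2 (lt_add_of_pos_right lam ε.2))).trans
        (convexHull_mono subset_closure)).trans
      (iInter_convexHull_subset_convexHull_iInter hdir hK)
  have hclosed : IsClosed (convexHull ℝ (⋂ ε, K ε)) :=
    (isCompact_convexHull ((hK ⟨1, mem_Ioi.2 one_pos⟩).of_isClosed_subset
      (isClosed_iInter fun _ => isClosed_closure) (iInter_subset K _))).isClosed
  rw [sublevel_lscEnv_eq_iInter_closure_sublevel, hiInter]
  exact ⟨closure_minimal hL hclosed, hL⟩
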